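/- Assume symmetric reliability requirements (τ = 1) with δ = 1 and 1 < c_A ≤ c_B. Then in every graph G on V that is pairwise stable under the reliable cost, every two distinct vertices i, j are joined by two edge-disjoint paths, and g_G(i,j) ≤ 4 + 4·c_B; in particular each of the two cost-minimizing edge-disjoint path lengths between i and j is at most 2 + 2·c_B. By contrast, with asymmetric requirements (τ = 0) there exist pairwise-stable graphs in which some pair of nodes is not joined by two edge-disjoint paths. -/

import Mathlib

/-!
In a pairwise-stable graph every reliable cost is finite: a node of infinite cost would not
strictly lose by dropping one of its links, nor by accepting a new one. So every `g_G(i,j)` is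
finite and attained by two edge-disjoint paths.

If `i, j` are not adjacent, one endpoint strictly loses by adding `ij`. That link costs it at
most `c_B`, makes no `g`-distance longer, and brings `g(i,j)` down to at most `1 + d(i,j)`; as
`g(i,j)` enters the cost with weight at least `1/2`, we get `g(i,j) < 2 c_B + 1 + d(i,j)`.
If `i, j` are adjacent, `i` has a second neighbour `v` (otherwise `g(i,j)` would be infinite).
Either `v ~ j` and `g(i,j) ≤ 3`, or `g(i,j) ≤ g(v,j) < 2 c_B + 3`: a shortest cycle through
`v` and `j` either passes through `i` or can be rerouted through the links `iv` and `ij`.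
In both cases `g(i,j) < 2 c_B + 2 + d(i,j)`, and since each of the two paths has length at
least `d(i,j)`, each is shorter than `2 + 2 c_B`.

For `τ = 0`, a single link between two minor players is pairwise stable: dropping it
disconnects them, while they are never joined by two edge-disjoint paths.
-/

open SimpleGraph Classical
open scoped ENNReal

noncomputable section

variable {V : Type*} [Fintype V] [DecidableEq V]

/-- The degree of node `i` in `G`. -/
def degE (G : SimpleGraph V) (i : V) : ℕ := (G.neighborSet i).ncard

/-- The hop distance between `i` and `j`, with value `+∞` for unreachable pairs. -/
def dE (G : SimpleGraph V) (i j : V) : ℝ≥0∞ :=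
  if G.Reachable i j then (G.dist i j : ℝ≥0∞) else ⊤

/-- `g_G(i,j)`: the minimum of `length p + length q` over pairs `(p, q)` of
edge-disjoint `i`–`j` paths (equivalently, the length of a shortest cycle through `i`
and `j`), with value `+∞` if no such pair exists. -/
def gdist (G : SimpleGraph V) (i j : V) : ℝ≥0∞ :=
  sInf {n : ℝ≥0∞ | ∃ p q : G.Path i j,
    (∀ e ∈ (p : G.Walk i j).edges, e ∉ (q : G.Walk i j).edges) ∧
    n = ((p : G.Walk i j).length : ℝ≥0∞) + ((q : G.Walk i j).length : ℝ≥0∞)}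

/-- `G` with the edge `ij` removed. -/
def delE (G : SimpleGraph V) (i j : V) : SimpleGraph V := G.deleteEdges {s(i, j)}

/-- `G` with the edge `ij` added. -/
def addE (G : SimpleGraph V) (i j : V) : SimpleGraph V := G ⊔ edge i j

/-- The reliable cost of node `i` under symmetric reliability requirements (`τ = 1`)
with failure weight `δ = 1`. -/
def costRel (TA : Finset V) (A cA cB : ℝ) (G : SimpleGraph V) (i : V) : ℝ≥0∞ :=
  (degE G i : ℝ≥0∞) * ENNReal.ofReal (if i ∈ TA then cA else cB)
    + ENNReal.ofReal (A / 2) * ∑ j ∈ TA.erase i, gdist G i j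
    + ENNReal.ofReal (1 / 2) * ∑ j ∈ TAᶜ.erase i, gdist G i j

/-- Pairwise stability for the reliable model: removing any present edge strictly
increases the reliable cost of both endpoints, and adding any absent edge strictly
increases the reliable cost of at least one endpoint. -/
def PairwiseStableRel (TA : Finset V) (A cA cB : ℝ) (G : SimpleGraph V) : Prop :=
  (∀ i j : V, G.Adj i j →
    costRel TA A cA cB G i < costRel TA A cA cB (delE G i j) i ∧
    costRel TA A cA cB G j < costRel TA A cA cB (delE G i j) j) ∧
  (∀ i j : V, i ≠ j → ¬ G.Adj i j →
    costRel TA A cA cB G i < costRel TA A cA cB (addE G i j) i ∨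
    costRel TA A cA cB G j < costRel TA A cA cB (addE G i j) j)

/-- The reliable cost of node `i` under *asymmetric* reliability requirements (`τ = 0`)
with failure weight `δ = 1`: the type-B sum uses the ordinary distance `d_G(i,j)`. -/
def costRel0 (TA : Finset V) (A cA cB : ℝ) (G : SimpleGraph V) (i : V) : ℝ≥0∞ :=
  (degE G i : ℝ≥0∞) * ENNReal.ofReal (if i ∈ TA then cA else cB)
    + ENNReal.ofReal (A / 2) * ∑ j ∈ TA.erase i, gdist G i j
    + ∑ j ∈ TAᶜ.erase i, dE G i j

/-- Pairwise stability for the asymmetric (`τ = 0`) reliable model. -/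
def PairwiseStableRel0 (TA : Finset V) (A cA cB : ℝ) (G : SimpleGraph V) : Prop :=
  (∀ i j : V, G.Adj i j →
    costRel0 TA A cA cB G i < costRel0 TA A cA cB (delE G i j) i ∧
    costRel0 TA A cA cB G j < costRel0 TA A cA cB (delE G i j) j) ∧
  (∀ i j : V, i ≠ j → ¬ G.Adj i j →
    costRel0 TA A cA cB G i < costRel0 TA A cA cB (addE G i j) i ∨
    costRel0 TA A cA cB G j < costRel0 TA A cA cB (addE G i j) j)

section EdgeDisjointPaths

variable {V : Type*} {G H : SimpleGraph V} {i j v : V}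

lemma SimpleGraph.Walk.mk_mem_edges_of_length_eq_one {u w : V} (p : G.Walk u w)
    (h : p.length = 1) :
    s(u, w) ∈ p.edges := by
  have := p.mk_start_snd_mem_edges (by simp [← Walk.length_eq_zero_iff, h])
  rwa [Walk.snd, ← h, Walk.getVert_length] at this

lemma gdist_le (p q : G.Path i j)
    (hpq : ∀ e ∈ (p : G.Walk i j).edges, e ∉ (q : G.Walk i j).edges) :
    gdist G i j ≤ (p : G.Walk i j).length + (q : G.Walk i j).length :=
  sInf_le ⟨p, q, hpq, rfl⟩

lemma exists_gdist_eq (h : gdist G i j ≠ ⊤) :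
    ∃ p q : G.Path i j, (∀ e ∈ (p : G.Walk i j).edges, e ∉ (q : G.Walk i j).edges) ∧
      ((p : G.Walk i j).length : ℝ≥0∞) + (q : G.Walk i j).length = gdist G i j := by
  let Disj (pq : G.Path i j × G.Path i j) : Prop :=
    ∀ e ∈ (pq.1 : G.Walk i j).edges, e ∉ (pq.2 : G.Walk i j).edges
  let len (pq : G.Path i j × G.Path i j) : ℕ :=
    (pq.1 : G.Walk i j).length + (pq.2 : G.Walk i j).length
  have hne : ∃ pq, Disj pq := by
    by_contra! hno
    refine h (sInf_eq_top.mpr ?_)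
    rintro _ ⟨p, q, hpq, rfl⟩
    exact absurd hpq (hno (p, q))
  obtain ⟨⟨p, q⟩, hpq, hmin⟩ := exists_minimalFor_of_wellFoundedLT Disj len hne
  refine ⟨p, q, hpq, le_antisymm ?_ (gdist_le p q hpq)⟩
  refine le_sInf ?_
  rintro _ ⟨p', q', hpq', rfl⟩
  have : len (p, q) ≤ len (p', q') := by
    rcases le_total (len (p, q)) (len (p', q')) with h | h
    exacts [h, hmin hpq' h]
  exact_mod_cast this

lemma gdist_comm (G : SimpleGraph V) (i j : V) : gdist G i j = gdist G j i := by
  suffices ∀ u w : V, gdist G u w ≤ gdist G w u from le_antisymm (this i j) (this j i)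
  intro u w
  refine le_sInf ?_
  rintro _ ⟨p, q, hpq, rfl⟩
  simpa using gdist_le p.reverse q.reverse (by simpa using hpq)

lemma gdist_anti (hGH : G ≤ H) (i j : V) : gdist H i j ≤ gdist G i j := by
  refine le_sInf ?_
  rintro _ ⟨p, q, hpq, rfl⟩
  simpa using gdist_le ⟨_, p.2.mapLe hGH⟩ ⟨_, q.2.mapLe hGH⟩ (by simpa using hpq)

lemma gdist_le_one_add_length (hij : G.Adj i j) (p : G.Path i j)
    (hp : s(i, j) ∉ (p : G.Walk i j).edges) :
    gdist G i j ≤ 1 + (p : G.Walk i j).length := by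
  simpa using gdist_le (Path.singleton hij) p (by simpa using hp)

lemma gdist_le_three (hij : G.Adj i j) (hiv : G.Adj i v) (hvj : G.Adj v j) :
    gdist G i j ≤ 3 := by
  have hp : (Walk.cons hiv (Walk.cons hvj Walk.nil)).IsPath := by
    simp [hiv.ne, hvj.ne, hij.ne]
  have := gdist_le_one_add_length hij ⟨_, hp⟩ (by simp [hvj.ne.symm, hiv.ne])
  exact this.trans_eq (by norm_num)

lemma gdist_le_of_mem_support (p q : G.Path v j)
    (hpq : ∀ e ∈ (p : G.Walk v j).edges, e ∉ (q : G.Walk v j).edges)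
    (hi : i ∈ (p : G.Walk v j).support) :
    gdist G i j ≤ (p : G.Walk v j).length + (q : G.Walk v j).length := by
  set w := (p : G.Walk v j)
  -- the second path runs back along `p` from `i` to `v` and then along `q`
  set r := ((w.takeUntil i hi).reverse.append (q : G.Walk v j)).bypass
  have hdisj : ∀ e ∈ (w.dropUntil i hi).edges, e ∉ r.edges := by
    intro e hdrop hr
    have hr := Walk.edges_bypass_subset_edges _ hr
    simp only [Walk.edges_append, Walk.edges_reverse, List.mem_append, List.mem_reverse] at hr
    rcases hr with htake | hq
    · exact p.2.isTrail.disjoint_edges_takeUntil_dropUntil hi htake hdrop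
    · exact hpq e (w.edges_dropUntil_subset_edges hi hdrop) hq
  have hlen : (w.dropUntil i hi).length + r.length ≤ w.length + (q : G.Walk v j).length := by
    have hr : r.length ≤ (w.takeUntil i hi).length + (q : G.Walk v j).length := by
      simpa using (((w.takeUntil i hi).reverse.append (q : G.Walk v j))).length_bypass_le_length
    have hw : (w.takeUntil i hi).length + (w.dropUntil i hi).length = w.length := by
      rw [← Walk.length_append, w.take_spec hi]
    omega
  calc gdist G i j ≤ _ := gdist_le ⟨_, p.2.dropUntil hi⟩ ⟨r, Walk.bypass_isPath _⟩ hdisj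
    _ ≤ _ := by exact_mod_cast hlen

lemma exists_adj_ne_of_gdist_ne_top (hij : i ≠ j) (h : gdist G i j ≠ ⊤) :
    ∃ v, G.Adj i v ∧ v ≠ j := by
  obtain ⟨p, q, hpq, -⟩ := exists_gdist_eq h
  have hp := Walk.not_nil_of_ne (p := (p : G.Walk i j)) hij
  have hq := Walk.not_nil_of_ne (p := (q : G.Walk i j)) hij
  by_cases hpj : (p : G.Walk i j).snd = j
  · refine ⟨_, Walk.adj_snd hq, fun hqj => hpq s(i, j) ?_ ?_⟩
    · simpa [hpj] using Walk.mk_start_snd_mem_edges hp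
    · simpa [hqj] using Walk.mk_start_snd_mem_edges hq
  · exact ⟨_, Walk.adj_snd hp, hpj⟩

lemma gdist_le_gdist_of_adj (hij : G.Adj i j) (hiv : G.Adj i v) (hvj : v ≠ j) :
    gdist G i j ≤ gdist G v j := by
  refine le_sInf ?_
  rintro _ ⟨p, q, hpq, rfl⟩
  have hqp : ∀ e ∈ (q : G.Walk v j).edges, e ∉ (p : G.Walk v j).edges :=
    fun e hq hp => hpq e hp hq
  by_cases hip : i ∈ (p : G.Walk v j).support
  · exact gdist_le_of_mem_support p q hpq hip
  by_cases hiq : i ∈ (q : G.Walk v j).support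
  · rw [add_comm]
    exact gdist_le_of_mem_support q p hqp hiq
  wlog hle : (p : G.Walk v j).length ≤ (q : G.Walk v j).length generalizing p q
  · rw [add_comm]
    exact this q p hqp hpq hiq hip (le_of_not_ge hle)
  -- `p` and `q` cannot both be the single edge `vj`
  have hq2 : 2 ≤ (q : G.Walk v j).length := by
    have hp1 : 1 ≤ (p : G.Walk v j).length :=
      Nat.one_le_iff_ne_zero.mpr fun h => hvj (Walk.eq_of_length_eq_zero h)
    by_contra! hq1
    have hp := Walk.mk_mem_edges_of_length_eq_one _ (show (p : G.Walk v j).length = 1 by omega)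
    have hq := Walk.mk_mem_edges_of_length_eq_one _ (show (q : G.Walk v j).length = 1 by omega)
    exact hpq _ hp hq
  have hcycle : (Walk.cons hiv (p : G.Walk v j)).IsPath :=
    (Walk.cons_isPath_iff _ _).mpr ⟨p.2, hip⟩
  have hij_notin : s(i, j) ∉ (Walk.cons hiv (p : G.Walk v j)).edges := by
    simp only [Walk.edges_cons, List.mem_cons, Sym2.congr_right, not_or]
    exact ⟨hvj.symm, fun h => hip ((p : G.Walk v j).fst_mem_support_of_mem_edges h)⟩
  calc gdist G i j ≤ 1 + (Walk.cons hiv (p : G.Walk v j)).length :=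
        gdist_le_one_add_length hij ⟨_, hcycle⟩ hij_notin
    _ ≤ _ := by simp only [Walk.length_cons]; norm_cast; omega

lemma addE_comm (G : SimpleGraph V) (i j : V) : addE G i j = addE G j i := by
  rw [addE, addE, edge_comm]

lemma gdist_addE_le (hij : i ≠ j) (hnadj : ¬ G.Adj i j) (hreach : G.Reachable i j) :
    gdist (addE G i j) i j ≤ 1 + G.dist i j := by
  obtain ⟨p, hpath, hp⟩ := hreach.exists_path_of_dist
  have hle : G ≤ addE G i j := le_sup_left
  have hij' : (addE G i j).Adj i j := by simp [addE, edge_adj, hij]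
  have := gdist_le_one_add_length hij' ⟨_, hpath.mapLe hle⟩
    (by simpa using fun h => hnadj (p.adj_of_mem_edges h))
  simpa [hp] using this

end EdgeDisjointPaths

lemma degE_addE {V : Type*} [Fintype V] {G : SimpleGraph V} {i j : V} (hij : i ≠ j)
    (hnadj : ¬ G.Adj i j) :
    degE (addE G i j) i = degE G i + 1 := by
  have : (addE G i j).neighborSet i = insert j (G.neighborSet i) := by
    ext k
    simp only [addE, mem_neighborSet, sup_adj, edge_adj, Set.mem_insert_iff]
    grind
  rw [degE, degE, this, Set.ncard_insert_of_notMem (by simpa using hnadj)]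

lemma lt_two_mul_add_of_mul_lt_add_mul {w c x y : ℝ} (hw : 1 / 2 ≤ w) (hc : 0 < c)
    (h : w * x < c + w * y) : x < 2 * c + y := by
  rcases le_or_gt x y with hxy | hxy
  · linarith
  · nlinarith

section ReliableCost

variable {V : Type*} [Fintype V] [DecidableEq V] {TA : Finset V} {A cA cB : ℝ}
  {G H : SimpleGraph V} {i j : V}

lemma costRel_eq_add_sum (TA : Finset V) (A cA cB : ℝ) (G : SimpleGraph V) (i : V) :
    costRel TA A cA cB G i = degE G i * ENNReal.ofReal (if i ∈ TA then cA else cB) +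
      ∑ k ∈ Finset.univ.erase i,
        ENNReal.ofReal (if k ∈ TA then A / 2 else 1 / 2) * gdist G i k := by
  have hA : (Finset.univ.erase i).filter (· ∈ TA) = TA.erase i := by ext; simp [and_comm]
  have hB : (Finset.univ.erase i).filter (· ∉ TA) = TAᶜ.erase i := by ext; simp [and_comm]
  simp only [apply_ite ENNReal.ofReal, ite_mul, Finset.sum_ite, hA, hB, costRel,
    Finset.mul_sum, add_assoc]

lemma costRel_eq_top (hA : 0 < A) (hji : j ≠ i) (h : gdist G i j = ⊤) :
    costRel TA A cA cB G i = ⊤ := by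
  have hw : ENNReal.ofReal (if j ∈ TA then A / 2 else 1 / 2) ≠ 0 := by
    split_ifs <;> simp [hA]
  rw [costRel_eq_add_sum, ENNReal.add_eq_top, ENNReal.sum_eq_top]
  exact Or.inr ⟨j, by simp [hji], by rw [h, ENNReal.mul_top hw]⟩

lemma PairwiseStableRel.gdist_ne_top (hA : 0 < A) (hst : PairwiseStableRel TA A cA cB G)
    (hij : i ≠ j) : gdist G i j ≠ ⊤ := by
  intro h
  have h' : gdist G j i = ⊤ := by rwa [gdist_comm]
  by_cases hk : ∃ k, G.Adj i k
  · obtain ⟨k, hik⟩ := hk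
    exact not_top_lt (costRel_eq_top hA hij.symm h ▸ (hst.1 i k hik).1)
  · simp only [not_exists] at hk
    rcases hst.2 i j hij (hk j) with hi | hj
    · exact not_top_lt (costRel_eq_top hA hij.symm h ▸ hi)
    · exact not_top_lt (costRel_eq_top hA hij h' ▸ hj)

lemma gdist_toReal_lt_of_costRel_lt (hA : 1 ≤ A) (hcA : 0 < cA) (hAB : cA ≤ cB)
    (hGH : G ≤ H) (hdeg : degE H i = degE G i + 1) (hfin : ∀ k ≠ i, gdist G i k ≠ ⊤)
    (hji : j ≠ i) (hlt : costRel TA A cA cB G i < costRel TA A cA cB H i) :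
    (gdist G i j).toReal < 2 * cB + (gdist H i j).toReal := by
  set c : ℝ := if i ∈ TA then cA else cB
  set w : V → ℝ := fun k => if k ∈ TA then A / 2 else 1 / 2
  -- every pair enters the cost of `i` with weight at least `1/2`, whence the factor 2
  have hw : ∀ k, 1 / 2 ≤ w k := fun k => by simp only [w]; split_ifs <;> linarith
  have hc : 0 < c ∧ c ≤ cB := by simp only [c]; split_ifs <;> constructor <;> linarith
  have hfinH : gdist H i j ≠ ⊤ := ne_top_of_le_ne_top (hfin j hji) (gdist_anti hGH i j)
  set R : SimpleGraph V → ℝ≥0∞ := fun F =>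
    ∑ k ∈ (Finset.univ.erase i).erase j, ENNReal.ofReal (w k) * gdist F i k
  have hsplit : ∀ F, costRel TA A cA cB F i =
      degE F i * ENNReal.ofReal c + (ENNReal.ofReal (w j) * gdist F i j + R F) := fun F => by
    rw [costRel_eq_add_sum, ← Finset.add_sum_erase _ _ (by simpa using hji)]
  have hRfin : (degE G i : ℝ≥0∞) * ENNReal.ofReal c + R G ≠ ⊤ := by
    refine ENNReal.add_ne_top.mpr ⟨by finiteness, ENNReal.sum_ne_top.mpr fun k hk => ?_⟩
    exact ENNReal.mul_ne_top ENNReal.ofReal_ne_top (hfin k (Finset.ne_of_mem_erase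
      (Finset.mem_of_mem_erase hk)))
  have hR : R H ≤ R G := Finset.sum_le_sum fun k _ => by gcongr; exact gdist_anti hGH i k
  have key : ENNReal.ofReal (w j) * gdist G i j <
      ENNReal.ofReal c + ENNReal.ofReal (w j) * gdist H i j := by
    refine (ENNReal.add_lt_add_iff_right hRfin).mp ?_
    calc _ = costRel TA A cA cB G i := by rw [hsplit]; ring
      _ < costRel TA A cA cB H i := hlt
      _ ≤ ((degE G i : ℝ≥0∞) + 1) * ENNReal.ofReal c +
            (ENNReal.ofReal (w j) * gdist H i j + R G) := by
        rw [hsplit, hdeg]; push_cast; gcongr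
      _ = _ := by ring
  rw [← ENNReal.toReal_lt_toReal (by finiteness) (by finiteness)] at key
  simp only [ENNReal.toReal_add, ENNReal.toReal_mul, ENNReal.toReal_ofReal, ENNReal.ofReal_ne_top,
    ENNReal.mul_ne_top, hfinH, ne_eq, not_false_eq_true, hc.1.le,
    (by linarith [hw j] : 0 ≤ w j)] at key
  linarith [lt_two_mul_add_of_mul_lt_add_mul (hw j) hc.1 key]

lemma gdist_toReal_lt_of_costRel_addE_lt (hA : 1 ≤ A) (hcA : 0 < cA) (hAB : cA ≤ cB)
    (hfin : ∀ k ≠ i, gdist G i k ≠ ⊤) (hij : i ≠ j) (hnadj : ¬ G.Adj i j)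
    (hlt : costRel TA A cA cB G i < costRel TA A cA cB (addE G i j) i) :
    (gdist G i j).toReal < 2 * cB + 1 + G.dist i j := by
  have hreach : G.Reachable i j := by
    obtain ⟨p, -⟩ := exists_gdist_eq (hfin j hij.symm)
    exact ⟨p⟩
  have hgain := gdist_toReal_lt_of_costRel_lt (H := addE G i j) hA hcA hAB le_sup_left
    (degE_addE hij hnadj) hfin hij.symm hlt
  have hadd : (gdist (addE G i j) i j).toReal ≤ 1 + G.dist i j := by
    have := ENNReal.toReal_mono (by finiteness) (gdist_addE_le hij hnadj hreach)
    rwa [ENNReal.toReal_add (by simp) (by simp), ENNReal.toReal_one,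
      ENNReal.toReal_natCast] at this
  linarith

lemma PairwiseStableRel.gdist_toReal_lt_of_not_adj (hA : 1 ≤ A) (hcA : 0 < cA)
    (hAB : cA ≤ cB) (hst : PairwiseStableRel TA A cA cB G) (hij : i ≠ j)
    (hnadj : ¬ G.Adj i j) :
    (gdist G i j).toReal < 2 * cB + 1 + G.dist i j := by
  have hfin : ∀ u, ∀ k ≠ u, gdist G u k ≠ ⊤ :=
    fun u k hk => hst.gdist_ne_top (by linarith) hk.symm
  rcases hst.2 i j hij hnadj with hi | hj
  · exact gdist_toReal_lt_of_costRel_addE_lt hA hcA hAB (hfin i) hij hnadj hi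
  · rw [addE_comm] at hj
    rw [gdist_comm, dist_comm]
    exact gdist_toReal_lt_of_costRel_addE_lt hA hcA hAB (hfin j) hij.symm
      (fun h => hnadj h.symm) hj

lemma PairwiseStableRel.gdist_toReal_lt_of_adj (hA : 1 ≤ A) (hcA : 0 < cA)
    (hAB : cA ≤ cB) (hst : PairwiseStableRel TA A cA cB G) (hij : G.Adj i j) :
    (gdist G i j).toReal < 2 * cB + 3 := by
  obtain ⟨v, hiv, hvj⟩ :=
    exists_adj_ne_of_gdist_ne_top hij.ne (hst.gdist_ne_top (by linarith) hij.ne)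
  by_cases hvj' : G.Adj v j
  · have := ENNReal.toReal_mono (by finiteness) (gdist_le_three hij hiv hvj')
    norm_num at this
    linarith
  · have hdist : (G.dist v j : ℝ) ≤ 2 := by
      exact_mod_cast (dist_le (Walk.cons hiv.symm (Walk.cons hij Walk.nil))).trans_eq rfl
    have := ENNReal.toReal_mono (hst.gdist_ne_top (by linarith) hvj)
      (gdist_le_gdist_of_adj hij hiv hvj)
    linarith [hst.gdist_toReal_lt_of_not_adj hA hcA hAB hvj hvj']

lemma PairwiseStableRel.exists_paths_length_lt (hA : 1 ≤ A) (hcA : 0 < cA)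
    (hAB : cA ≤ cB) (hst : PairwiseStableRel TA A cA cB G) (hij : i ≠ j) :
    ∃ p q : G.Path i j, (∀ e ∈ (p : G.Walk i j).edges, e ∉ (q : G.Walk i j).edges) ∧
      ((p : G.Walk i j).length : ℝ≥0∞) + (q : G.Walk i j).length = gdist G i j ∧
      ((p : G.Walk i j).length : ℝ) < 2 + 2 * cB ∧
      ((q : G.Walk i j).length : ℝ) < 2 + 2 * cB := by
  obtain ⟨p, q, hpq, hsum⟩ := exists_gdist_eq (hst.gdist_ne_top (by linarith) hij)
  have hlen : (gdist G i j).toReal = (p : G.Walk i j).length + (q : G.Walk i j).length := by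
    rw [← hsum]; norm_cast
  have hbound : (gdist G i j).toReal < 2 * cB + 2 + G.dist i j := by
    by_cases hadj : G.Adj i j
    · rw [dist_eq_one_iff_adj.mpr hadj]
      push_cast
      linarith [hst.gdist_toReal_lt_of_adj hA hcA hAB hadj]
    · linarith [hst.gdist_toReal_lt_of_not_adj hA hcA hAB hij hadj]
  have hp : (G.dist i j : ℝ) ≤ (p : G.Walk i j).length := by exact_mod_cast dist_le _
  have hq : (G.dist i j : ℝ) ≤ (q : G.Walk i j).length := by exact_mod_cast dist_le _
  exact ⟨p, q, hpq, hsum, by linarith, by linarith⟩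

end ReliableCost

lemma dE_ne_top_iff {V : Type*} [Fintype V] [DecidableEq V] {G : SimpleGraph V} {i j : V} :
    dE G i j ≠ ⊤ ↔ G.Reachable i j := by
  unfold dE
  split_ifs with h <;> simp [h]

lemma delE_top_fin_two {i j : Fin 2} (hij : i ≠ j) : delE ⊤ i j = ⊥ := by
  ext a b
  simp only [delE, deleteEdges_adj, top_adj, Set.mem_singleton_iff, bot_adj, iff_false, not_and,
    not_not]
  revert a b i j
  decide

lemma costRel0_top_fin_two_ne_top (A cA cB : ℝ) (i : Fin 2) :
    costRel0 ∅ A cA cB ⊤ i ≠ ⊤ := by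
  have hdE : ∀ k ∈ (∅ : Finset (Fin 2))ᶜ.erase i, dE ⊤ i k ≠ ⊤ := fun k hk =>
    dE_ne_top_iff.mpr (Adj.reachable (by simpa using (Finset.ne_of_mem_erase hk).symm))
  simp only [costRel0, Finset.erase_empty, Finset.sum_empty, mul_zero, add_zero]
  exact ENNReal.add_ne_top.mpr ⟨by finiteness, ENNReal.sum_ne_top.mpr hdE⟩

lemma costRel0_delE_top_fin_two_eq_top (A cA cB : ℝ) {i j : Fin 2} (hij : i ≠ j) :
    costRel0 ∅ A cA cB (delE ⊤ i j) i = ⊤ := by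
  have hj : dE (delE ⊤ i j) i j = ⊤ := by
    rw [delE_top_fin_two hij]
    by_contra h
    exact hij (reachable_bot.mp (dE_ne_top_iff.mp h))
  rw [costRel0, ENNReal.add_eq_top, ENNReal.sum_eq_top]
  exact Or.inr ⟨j, by simp [hij.symm], hj⟩

lemma pairwiseStableRel0_top_fin_two (A cA cB : ℝ) :
    PairwiseStableRel0 ∅ A cA cB (⊤ : SimpleGraph (Fin 2)) := by
  refine ⟨fun i j hij => ⟨?_, ?_⟩,
    fun i j hij hnadj => (hnadj ((top_adj i j).mpr hij)).elim⟩
  · rw [costRel0_delE_top_fin_two_eq_top A cA cB hij.ne]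
    exact (costRel0_top_fin_two_ne_top A cA cB i).lt_top
  · rw [delE, Sym2.eq_swap, ← delE, costRel0_delE_top_fin_two_eq_top A cA cB hij.ne.symm]
    exact (costRel0_top_fin_two_ne_top A cA cB j).lt_top

lemma not_exists_edgeDisjoint_paths_top_fin_two :
    ¬ ∃ p q : (⊤ : SimpleGraph (Fin 2)).Path 0 1,
      ∀ e ∈ (p : (⊤ : SimpleGraph (Fin 2)).Walk 0 1).edges,
        e ∉ (q : (⊤ : SimpleGraph (Fin 2)).Walk 0 1).edges := by
  have hsnd : ∀ w : (⊤ : SimpleGraph (Fin 2)).Walk 0 1, s(0, 1) ∈ w.edges := fun w => by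
    have hnil := Walk.not_nil_of_ne (p := w) (by decide)
    have h1 : w.snd = 1 := Fin.eq_one_of_ne_zero _ (Walk.adj_snd hnil).ne.symm
    simpa [h1] using w.mk_start_snd_mem_edges hnil
  rintro ⟨p, q, hpq⟩
  exact hpq _ (hsnd p) (hsnd q)

/-- With symmetric reliability requirements (`τ = 1`, `δ = 1`) and
`1 < c_A ≤ c_B`, in every pairwise-stable graph `G` (for the reliable cost) every two
distinct vertices `i, j` are joined by two edge-disjoint paths with
`g_G(i,j) ≤ 4 + 4c_B`, and the two cost-minimizing edge-disjoint path lengths are each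
at most `2 + 2c_B`. By contrast, with asymmetric requirements (`τ = 0`) there exist
pairwise-stable graphs in which some pair of nodes is not joined by two edge-disjoint
paths. -/
theorem stmt16 (TA : Finset V) (A cA cB : ℝ)
    (hA : 1 < A) (hcA : 1 < cA) (hAB : cA ≤ cB)
    (G : SimpleGraph V) (hstable : PairwiseStableRel TA A cA cB G) :
    (∀ i j : V, i ≠ j →
      gdist G i j ≤ ENNReal.ofReal (4 + 4 * cB) ∧
      ∃ p q : G.Path i j,
        (∀ e ∈ (p : G.Walk i j).edges, e ∉ (q : G.Walk i j).edges) ∧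
        (((p : G.Walk i j).length : ℝ≥0∞) + ((q : G.Walk i j).length : ℝ≥0∞) =
          gdist G i j) ∧
        ((p : G.Walk i j).length : ℝ) ≤ 2 + 2 * cB ∧
        ((q : G.Walk i j).length : ℝ) ≤ 2 + 2 * cB) ∧
    (∃ (n : ℕ) (TA' : Finset (Fin n)) (A' cA' cB' : ℝ) (G' : SimpleGraph (Fin n)),
      1 < A' ∧ 1 < cA' ∧ cA' ≤ cB' ∧
      PairwiseStableRel0 TA' A' cA' cB' G' ∧
      ∃ i j : Fin n, i ≠ j ∧
        ¬ ∃ p q : G'.Path i j,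
          ∀ e ∈ (p : G'.Walk i j).edges, e ∉ (q : G'.Walk i j).edges) := by
  refine ⟨fun i j hij => ?_, ⟨2, ∅, 2, 2, 2, ⊤, one_lt_two, one_lt_two, le_rfl,
    pairwiseStableRel0_top_fin_two 2 2 2, 0, 1, by decide,
    not_exists_edgeDisjoint_paths_top_fin_two⟩⟩
  obtain ⟨p, q, hpq, hsum, hp, hq⟩ :=
    hstable.exists_paths_length_lt hA.le (by linarith) hAB hij
  refine ⟨?_, p, q, hpq, hsum, hp.le, hq.le⟩
  rw [← hsum, ← ENNReal.ofReal_natCast, ← ENNReal.ofReal_natCast, ← ENNReal.ofReal_add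
    (by positivity) (by positivity)]
  exact ENNReal.ofReal_le_ofReal (by linarith)

end
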